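/- For bond percolation on ℤ^d with d ≥ 2, the critical probability satisfies p_c(ℤ^d) < 1; that is, there exists p < 1 with θ(p) > 0. -/

import Mathlib

/-!
Peierls' argument in the plane `ℤ² ⊂ ℤ^d`. If the open cluster of the origin is finite, so is its
planar part `C`, and every edge between `C` and the unbounded component of its complement (the
outer boundary of `C`) is closed. The outer boundary is connected for `CodeAdj` (edges whose
midpoints are within sup-distance 1): a discrete Jordan curve theorem, proved with a mod-2
potential. A depth-first traversal of its `m + 1` edges is a chain of `2 * m` such steps starting
at the rightmost crossing of the positive x-axis; since the chain also meets the y-axis, there are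
at most `(2 * m + 2) * 25 ^ (2 * m) ≤ 1250 ^ (m + 1)` candidates. Each is closed with probability
`(1 - p) ^ (m + 1)`, so for `1 - p ≤ 1 / 5000` the cluster is finite with probability below `1`.
-/

open MeasureTheory
open scoped ENNReal

namespace Percolation

variable {V : Type} (G : SimpleGraph V)

/-- A bond-percolation configuration: each edge of `G` is open (`true`) or closed (`false`). -/
abbrev Config := G.edgeSet → Bool

/-- A walk all of whose edges are open. -/
def IsOpenWalk {u v : V} (ω : Config G) (w : G.Walk u v) : Prop :=
  ∀ e (he : e ∈ w.edges), ω ⟨e, w.edges_subset_edgeSet he⟩ = true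

/-- The open cluster of a vertex `v`: all vertices joined to `v` by an open path. -/
def cluster (ω : Config G) (v : V) : Set V :=
  {u | ∃ w : G.Walk v u, IsOpenWalk G ω w}

/-- `μ` is the product Bernoulli(`p`) measure on configurations: a probability measure whose
cylinder events have the right probability (this determines `μ` uniquely). -/
def IsBernoulli (p : ℝ) (μ : Measure (Config G)) : Prop :=
  IsProbabilityMeasure μ ∧
    ∀ (s : Finset G.edgeSet) (f : G.edgeSet → Bool),
      μ {ω | ∀ e ∈ s, ω e = f e} =
        ∏ e ∈ s, (if f e then ENNReal.ofReal p else ENNReal.ofReal (1 - p))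

/-- The nearest-neighbour (hyper)cubic lattice `ℤ^d`. -/
def zdGraph (d : ℕ) : SimpleGraph (Fin d → ℤ) where
  Adj x y := (∑ i, |x i - y i|) = 1
  symm := by
    constructor
    intro x y h
    have h' : ∀ i ∈ Finset.univ, |y i - x i| = |x i - y i| := fun i _ => abs_sub_comm _ _
    rw [Finset.sum_congr rfl h']
    exact h
  loopless := by constructor; intro x h; simp at h

/-- The percolation probability `θ(p)` for the cluster of the vertex `v`,
given a family `P` of percolation measures. -/
noncomputable def theta (P : ℝ → Measure (Config G)) (v : V) (p : ℝ) : ℝ≥0∞ :=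
  P p {ω | (cluster G ω v).Infinite}

/-- The critical probability `p_c = sup {p : θ(p) = 0}`. -/
noncomputable def pc (P : ℝ → Measure (Config G)) (v : V) : ℝ :=
  sSup {p : ℝ | p ∈ Set.Icc (0:ℝ) 1 ∧ theta G P v p = 0}

end Percolation

open Percolation

open Relation
open scoped Classical symmDiff

section Chains

variable {α : Type*} {r : α → α → Prop}

theorem Relation.ReflTransGen.exists_rel_mem_notMem {T : Set α} {a b : α}
    (h : ReflTransGen r a b) (ha : a ∈ T) (hb : b ∉ T) : ∃ y ∈ T, ∃ x ∉ T, r y x := by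
  induction h with
  | refl => exact absurd ha hb
  | @tail c _ _ hcb ih =>
    by_cases hc : c ∈ T
    · exact ⟨c, hc, _, hb, hcb⟩
    · exact ih hc

theorem List.IsChain.exists_splice [DecidableEq α] (hsymm : ∀ a b, r a b → r b a) {l : List α}
    (hl : l.IsChain r) {y x : α} (hy : y ∈ l) (hyx : r y x) :
    ∃ l' : List α, l'.IsChain r ∧ l'.head? = l.head? ∧ l'.toFinset = insert x l.toFinset ∧
      l'.length = l.length + 2 := by
  obtain ⟨s, t, rfl⟩ := List.append_of_mem hy
  refine ⟨s ++ y :: x :: y :: t, ?_, by cases s <;> rfl, ?_, by simp; omega⟩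
  · rw [List.isChain_append] at hl ⊢
    exact ⟨hl.1, .cons_cons hyx (.cons_cons (hsymm _ _ hyx) hl.2.1), hl.2.2⟩
  · ext z
    simp only [List.mem_toFinset, List.mem_append, List.mem_cons, Finset.mem_insert]
    tauto

/- Depth-first search: the chain runs twice along each edge of a spanning tree. -/
theorem exists_isChain_toFinset_eq [DecidableEq α] (hsymm : ∀ a b, r a b → r b a)
    {S : Finset α} {x₀ : α} (hx₀ : x₀ ∈ S)
    (hconn : ∀ a ∈ S, ReflTransGen (fun u v => r u v ∧ u ∈ S ∧ v ∈ S) x₀ a) :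
    ∃ l : List α, (x₀ :: l).IsChain r ∧ (x₀ :: l).toFinset = S ∧
      l.length = 2 * (S.card - 1) := by
  have grow : ∀ m < S.card, ∃ l : List α, (x₀ :: l).IsChain r ∧ (x₀ :: l).toFinset ⊆ S ∧
      (x₀ :: l).toFinset.card = m + 1 ∧ l.length = 2 * m := by
    intro m
    induction m with
    | zero => exact fun _ => ⟨[], .singleton _, by simpa, by simp, rfl⟩
    | succ m ih =>
      intro hm
      obtain ⟨l, hl, hsub, hcard, hlen⟩ := ih (by omega)
      obtain ⟨a, haS, hal⟩ := Finset.exists_of_ssubset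
        (Finset.ssubset_iff_subset_ne.2 ⟨hsub, fun h => by rw [h] at hcard; omega⟩)
      obtain ⟨y, hy, x, hx, hyx, -, hxS⟩ := (hconn a haS).exists_rel_mem_notMem
        (T := {z | z ∈ x₀ :: l}) List.mem_cons_self (by simpa using hal)
      obtain ⟨l', hl', hhead, hto, hlen'⟩ := hl.exists_splice hsymm hy hyx
      obtain ⟨l', rfl⟩ := List.head?_eq_some_iff.1 hhead
      refine ⟨l', hl', ?_, ?_, by simp at hlen'; omega⟩
      · rw [hto]
        exact Finset.insert_subset hxS hsub
      · rw [hto, Finset.card_insert_of_notMem (by simpa using hx), hcard]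
  have hS := Finset.card_pos.2 ⟨_, hx₀⟩
  obtain ⟨l, hl, hsub, hcard, hlen⟩ := grow (S.card - 1) (by omega)
  exact ⟨l, hl, Finset.eq_of_subset_of_card_le hsub (by omega), hlen⟩

end Chains

namespace Percolation

section PlaneLattice

def PlaneAdj (a b : ℤ × ℤ) : Prop :=
  (a.1 = b.1 ∧ (a.2 = b.2 + 1 ∨ b.2 = a.2 + 1)) ∨ (a.2 = b.2 ∧ (a.1 = b.1 + 1 ∨ b.1 = a.1 + 1))

theorem PlaneAdj.symm {a b : ℤ × ℤ} (h : PlaneAdj a b) : PlaneAdj b a := by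
  unfold PlaneAdj at *; omega

theorem PlaneAdj.induction_on {Q : ℤ × ℤ → ℤ × ℤ → Prop} (symm : ∀ a b, Q a b → Q b a)
    (right : ∀ x y, Q (x, y) (x + 1, y)) (up : ∀ x y, Q (x, y) (x, y + 1)) {a b : ℤ × ℤ}
    (h : PlaneAdj a b) : Q a b := by
  obtain ⟨x, y⟩ := a
  obtain ⟨x', y'⟩ := b
  simp only [PlaneAdj] at h
  rcases h with ⟨rfl, rfl | rfl⟩ | ⟨rfl, rfl | rfl⟩
  exacts [symm _ _ (up _ _), up _ _, symm _ _ (right _ _), right _ _]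

theorem planeAdj_right (x y : ℤ) : PlaneAdj (x, y) (x + 1, y) := by simp [PlaneAdj]

theorem planeAdj_up (x y : ℤ) : PlaneAdj (x, y) (x, y + 1) := by simp [PlaneAdj]

/- The edge `{a, b}` of the square lattice is encoded by `a + b`, twice its midpoint: horizontal
edges get codes `(odd, even)`, vertical ones `(even, odd)`. -/
theorem PlaneAdj.eq_or_eq_of_add_eq {a b a' b' : ℤ × ℤ} (h : PlaneAdj a b) (h' : PlaneAdj a' b')
    (he : a + b = a' + b') : (a = a' ∧ b = b') ∨ (a = b' ∧ b = a') := by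
  unfold PlaneAdj at h h'
  simp only [Prod.ext_iff, Prod.fst_add, Prod.snd_add] at *
  omega

def IsCode (s : ℤ × ℤ) : Prop := ∃ a b, PlaneAdj a b ∧ a + b = s

def hCode (x y : ℤ) : ℤ × ℤ := (2 * x + 1, 2 * y)

def vCode (x y : ℤ) : ℤ × ℤ := (2 * x, 2 * y + 1)

theorem add_right_eq_hCode (x y : ℤ) : ((x, y) + (x + 1, y) : ℤ × ℤ) = hCode x y := by
  simp only [hCode, Prod.mk_add_mk, Prod.mk.injEq]; omega

theorem add_up_eq_vCode (x y : ℤ) : ((x, y) + (x, y + 1) : ℤ × ℤ) = vCode x y := by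
  simp only [vCode, Prod.mk_add_mk, Prod.mk.injEq]; omega

def box (R : ℤ) : Set (ℤ × ℤ) := Set.Icc (-R) R ×ˢ Set.Icc (-R) R

theorem mem_box {R : ℤ} {z : ℤ × ℤ} : z ∈ box R ↔ -R ≤ z.1 ∧ z.1 ≤ R ∧ -R ≤ z.2 ∧ z.2 ≤ R := by
  simp only [box, Set.mem_prod, Set.mem_Icc, and_assoc]

theorem finite_box (R : ℤ) : (box R).Finite := (Set.finite_Icc _ _).prod (Set.finite_Icc _ _)

/- Any two edges of a unit square are `CodeAdj`; the 25 steps `box 2` make chains easy to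
count. -/
def CodeAdj (s t : ℤ × ℤ) : Prop := t - s ∈ box 2

theorem CodeAdj.symm {s t : ℤ × ℤ} (h : CodeAdj s t) : CodeAdj t s := by
  simp only [CodeAdj, mem_box, Prod.fst_sub, Prod.snd_sub] at *; omega

def squareCodes (x y : ℤ) : Set (ℤ × ℤ) := {hCode x y, hCode x (y + 1), vCode x y, vCode (x + 1) y}

theorem codeAdj_of_mem_squareCodes {x y : ℤ} {s t : ℤ × ℤ} (hs : s ∈ squareCodes x y)
    (ht : t ∈ squareCodes x y) : CodeAdj s t := by
  simp only [squareCodes, Set.mem_insert_iff, Set.mem_singleton_iff] at hs ht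
  rcases hs with rfl | rfl | rfl | rfl <;> rcases ht with rfl | rfl | rfl | rfl <;>
    simp only [CodeAdj, mem_box, hCode, vCode, Prod.mk_sub_mk] <;> omega

end PlaneLattice

section Cuts

variable {X Y : Set (ℤ × ℤ)} {f g : ℤ × ℤ → Bool}

def IsCut (X : Set (ℤ × ℤ)) (f : ℤ × ℤ → Bool) : Prop :=
  ∀ a b, PlaneAdj a b → decide (a + b ∈ X) = xor (f a) (f b)

def EvenOnSquares (X : Set (ℤ × ℤ)) : Prop :=
  ∀ x y, xor (decide (hCode x y ∈ X)) (decide (hCode x (y + 1) ∈ X)) =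
    xor (decide (vCode x y ∈ X)) (decide (vCode (x + 1) y ∈ X))

theorem IsCut.evenOnSquares (hX : IsCut X f) : EvenOnSquares X := by
  intro x y
  rw [← add_right_eq_hCode x y, ← add_right_eq_hCode x (y + 1), ← add_up_eq_vCode x y,
    ← add_up_eq_vCode (x + 1) y, hX _ _ (planeAdj_right _ _), hX _ _ (planeAdj_right _ _),
    hX _ _ (planeAdj_up _ _), hX _ _ (planeAdj_up _ _)]
  generalize f (x, y) = a, f (x + 1, y) = b, f (x, y + 1) = c, f (x + 1, y + 1) = e
  revert a b c e; decide

theorem IsCut.symmDiff (hX : IsCut X f) (hY : IsCut Y g) :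
    IsCut (X ∆ Y) (fun z => xor (f z) (g z)) := by
  intro a b hab
  have hmem : decide (a + b ∈ X ∆ Y) = xor (decide (a + b ∈ X)) (decide (a + b ∈ Y)) := by
    by_cases h₁ : a + b ∈ X <;> by_cases h₂ : a + b ∈ Y <;> simp [Set.mem_symmDiff, h₁, h₂]
  rw [hmem, hX a b hab, hY a b hab]
  dsimp only
  generalize f a = a₁, f b = b₁, g a = a₂, g b = b₂
  revert a₁ b₁ a₂ b₂; decide

theorem IsCut.eq_of_reflTransGen (hX : IsCut X f) {u v : ℤ × ℤ}
    (h : ReflTransGen (fun a b => PlaneAdj a b ∧ a + b ∉ X) u v) : f u = f v := by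
  induction h with
  | refl => rfl
  | tail _ hbc ih =>
    have := hX _ _ hbc.1
    rw [decide_eq_false hbc.2] at this
    rw [ih]
    revert this; cases f _ <;> cases f _ <;> decide

theorem EvenOnSquares.of_subset (hY : EvenOnSquares Y) (hXY : X ⊆ Y)
    (hX : ∀ x y, ∀ s ∈ squareCodes x y, ∀ t ∈ squareCodes x y, s ∈ X → t ∈ Y → t ∈ X) :
    EvenOnSquares X := by
  intro x y
  by_cases hmeet : ∃ s ∈ squareCodes x y, s ∈ X
  · obtain ⟨s, hs, hsX⟩ := hmeet
    have hXY : ∀ t ∈ squareCodes x y, decide (t ∈ X) = decide (t ∈ Y) :=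
      fun t ht => decide_eq_decide.2 ⟨fun h => hXY h, hX x y s hs t ht hsX⟩
    rw [hXY _ (by simp [squareCodes]), hXY _ (by simp [squareCodes]),
      hXY _ (by simp [squareCodes]), hXY _ (by simp [squareCodes])]
    exact hY x y
  · push Not at hmeet
    have hX₀ : ∀ t ∈ squareCodes x y, decide (t ∈ X) = false :=
      fun t ht => decide_eq_false (hmeet t ht)
    rw [hX₀ _ (by simp [squareCodes]), hX₀ _ (by simp [squareCodes]),
      hX₀ _ (by simp [squareCodes]), hX₀ _ (by simp [squareCodes])]

end Cuts

section Potential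

noncomputable def intervalParity (P : ℤ → Prop) [DecidablePred P] (n : ℤ) : Bool :=
  decide (Odd ((Finset.Ico (min 0 n) (max 0 n)).filter P).card)

theorem intervalParity_zero (P : ℤ → Prop) [DecidablePred P] : intervalParity P 0 = false := by
  simp [intervalParity]

theorem decide_odd_card_filter_insert (P : ℤ → Prop) [DecidablePred P] {s : Finset ℤ} {n : ℤ}
    (hn : n ∉ s) :
    decide (Odd ((insert n s).filter P).card) =
      xor (decide (Odd (s.filter P).card)) (decide (P n)) := by
  by_cases hP : P n
  · rw [Finset.filter_insert, if_pos hP, Finset.card_insert_of_notMem (by simp [hn])]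
    by_cases hodd : Odd (s.filter P).card <;> simp [hP, hodd, Nat.odd_add_one]
  · simp [Finset.filter_insert, hP]

theorem intervalParity_add_one (P : ℤ → Prop) [DecidablePred P] (n : ℤ) :
    intervalParity P (n + 1) = xor (intervalParity P n) (decide (P n)) := by
  rcases le_or_gt 0 n with hn | hn
  · have hIco : Finset.Ico (min 0 (n + 1)) (max 0 (n + 1)) =
        insert n (Finset.Ico (min 0 n) (max 0 n)) := by
      ext; simp only [Finset.mem_Ico, Finset.mem_insert]; omega
    rw [intervalParity, hIco, decide_odd_card_filter_insert P (by simp; omega), intervalParity]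
  · have hIco : Finset.Ico (min 0 n) (max 0 n) =
        insert n (Finset.Ico (min 0 (n + 1)) (max 0 (n + 1))) := by
      ext; simp only [Finset.mem_Ico, Finset.mem_insert]; omega
    rw [intervalParity, intervalParity, hIco, decide_odd_card_filter_insert P (by simp; omega),
      Bool.xor_assoc, Bool.xor_self, Bool.xor_false]

variable {X : Set (ℤ × ℤ)}

/- The parity of the number of edges of `X` on the path from the origin to `z` that runs along
the x-axis to `(z.1, 0)` and then vertically. -/
noncomputable def potential (X : Set (ℤ × ℤ)) (z : ℤ × ℤ) : Bool :=
  xor (intervalParity (fun j => hCode j 0 ∈ X) z.1) (intervalParity (fun t => vCode z.1 t ∈ X) z.2)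

theorem decide_mem_vCode (X : Set (ℤ × ℤ)) (x y : ℤ) :
    decide (vCode x y ∈ X) = xor (potential X (x, y)) (potential X (x, y + 1)) := by
  simp only [potential, intervalParity_add_one]
  generalize intervalParity (fun j => hCode j 0 ∈ X) x = a,
    intervalParity (fun t => vCode x t ∈ X) y = b, decide (vCode x y ∈ X) = c
  revert a b c; decide

theorem EvenOnSquares.decide_mem_hCode (hX : EvenOnSquares X) (x y : ℤ) :
    decide (hCode x y ∈ X) = xor (potential X (x, y)) (potential X (x + 1, y)) := by
  have step : ∀ y, decide (hCode x y ∈ X) = xor (potential X (x, y)) (potential X (x + 1, y)) ↔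
      decide (hCode x (y + 1) ∈ X) =
        xor (potential X (x, y + 1)) (potential X (x + 1, y + 1)) := by
    intro y
    have hsq := hX x y
    rw [decide_mem_vCode, decide_mem_vCode] at hsq
    revert hsq
    generalize decide (hCode x y ∈ X) = a, decide (hCode x (y + 1) ∈ X) = b,
      potential X (x, y) = c, potential X (x, y + 1) = e, potential X (x + 1, y) = c',
      potential X (x + 1, y + 1) = e'
    revert a b c e c' e'; decide
  induction y using Int.induction_on with
  | zero =>
    simp only [potential, intervalParity_zero, Bool.xor_false, intervalParity_add_one]
    generalize intervalParity (fun j => hCode j 0 ∈ X) x = a, decide (hCode x 0 ∈ X) = c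
    revert a c; decide
  | succ y ih => exact (step y).1 ih
  | pred y ih => exact (step _).2 (by rwa [sub_add_cancel])

theorem isCut_potential (hX : EvenOnSquares X) : IsCut X (potential X) := by
  intro a b hab
  refine PlaneAdj.induction_on (Q := fun a b => decide (a + b ∈ X) = xor (potential X a)
    (potential X b)) (fun a b h => ?_) (fun x y => ?_) (fun x y => ?_) hab
  · rw [add_comm, h, Bool.xor_comm]
  · rw [add_right_eq_hCode, hX.decide_mem_hCode]
  · rw [add_up_eq_vCode, decide_mem_vCode]

end Potential

section OuterBoundary

theorem reflTransGen_of_planeAdj_succ {P : ℤ × ℤ → Prop} (f : ℤ → ℤ × ℤ)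
    (hf : ∀ t, PlaneAdj (f t) (f (t + 1))) {t₁ t₂ : ℤ} (h : t₁ ≤ t₂)
    (hP : ∀ t, t₁ ≤ t → t ≤ t₂ → P (f t)) :
    ReflTransGen (fun u v => PlaneAdj u v ∧ P u ∧ P v) (f t₁) (f t₂) := by
  induction t₂, h using Int.leInduction with
  | base => exact ReflTransGen.refl
  | succ t ht ih =>
    exact (ih fun t' h₁ h₂ => hP t' h₁ (by omega)).tail
      ⟨hf t, hP t ht (by omega), hP (t + 1) (by omega) le_rfl⟩

variable {C : Set (ℤ × ℤ)} {R : ℤ}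

/- For `C ⊆ box R` the corner stands for infinity: `z` lies in the unbounded component of the
complement of `C`. -/
def Escapes (C : Set (ℤ × ℤ)) (R : ℤ) (z : ℤ × ℤ) : Prop :=
  ReflTransGen (fun u v => PlaneAdj u v ∧ u ∉ C ∧ v ∉ C) z (R + 1, R + 1)

def outerBoundary (C : Set (ℤ × ℤ)) (R : ℤ) : Set (ℤ × ℤ) :=
  {s | ∃ a b, PlaneAdj a b ∧ a ∈ C ∧ Escapes C R b ∧ a + b = s}

variable (hR : C ⊆ box R)
include hR

theorem notMem_of_notMem_box {z : ℤ × ℤ} (hz : z ∉ box R) : z ∉ C :=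
  fun h => hz (hR h)

theorem Escapes.notMem {z : ℤ × ℤ} (h : Escapes C R z) : z ∉ C := by
  rcases h.cases_head with rfl | ⟨_, hz, _⟩
  · exact notMem_of_notMem_box hR (by simp only [mem_box]; omega)
  · exact hz.2.1

theorem Escapes.head {a b : ℤ × ℤ} (hb : Escapes C R b) (hab : PlaneAdj a b)
    (ha : a ∉ C) : Escapes C R a :=
  ReflTransGen.head ⟨hab, ha, hb.notMem hR⟩ hb

theorem mem_outerBoundary_iff {a b : ℤ × ℤ} (hab : PlaneAdj a b) :
    a + b ∈ outerBoundary C R ↔ (Escapes C R a ↔ ¬Escapes C R b) := by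
  constructor
  · rintro ⟨a', b', h', ha', hb', he⟩
    rcases h'.eq_or_eq_of_add_eq hab he with ⟨rfl, rfl⟩ | ⟨rfl, rfl⟩
    · exact iff_of_false (fun h => h.notMem hR ha') (not_not.2 hb')
    · exact iff_of_true hb' (fun h => h.notMem hR ha')
  · intro h
    by_cases ha : Escapes C R a
    · have hb := h.1 ha
      have hbC : b ∈ C := by_contra fun hbC => hb (ha.head hR hab.symm hbC)
      exact ⟨b, a, hab.symm, hbC, ha, add_comm b a⟩
    · have hb : Escapes C R b := by_contra fun hb => ha (h.2 hb)
      have haC : a ∈ C := by_contra fun haC => ha (hb.head hR hab haC)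
      exact ⟨a, b, hab, haC, hb, rfl⟩

theorem isCut_outerBoundary :
    IsCut (outerBoundary C R) (fun z => decide (Escapes C R z)) := by
  intro a b hab
  by_cases ha : Escapes C R a <;> by_cases hb : Escapes C R b <;>
    simp [mem_outerBoundary_iff hR hab, ha, hb]

theorem add_notMem_outerBoundary_of_mem {a b : ℤ × ℤ} (hab : PlaneAdj a b)
    (ha : a ∈ C) (hb : b ∈ C) : a + b ∉ outerBoundary C R := by
  rw [mem_outerBoundary_iff hR hab]
  exact fun h => (h.2 fun hb' => hb'.notMem hR hb).notMem hR ha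

theorem add_notMem_outerBoundary_of_notMem {a b : ℤ × ℤ} (hab : PlaneAdj a b)
    (ha : a ∉ C) (hb : b ∉ C) : a + b ∉ outerBoundary C R := by
  rw [mem_outerBoundary_iff hR hab]
  intro h
  by_cases hb' : Escapes C R b
  · exact h.1 (hb'.head hR hab ha) hb'
  · exact hb' ((h.2 hb').head hR hab.symm hb)

theorem outerBoundary_subset_box : outerBoundary C R ⊆ box (2 * R + 1) := by
  rintro _ ⟨a, b, hab, ha, -, rfl⟩
  have := mem_box.1 (hR ha)
  simp only [mem_box, Prod.fst_add, Prod.snd_add] at this ⊢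
  unfold PlaneAdj at hab
  omega

/- Walking from `f 0 ∈ C` along the line `f`, the last point of `C` and the next one span a
boundary edge. -/
theorem exists_add_mem_outerBoundary_of_line (f : ℤ → ℤ × ℤ)
    (hf : ∀ t, PlaneAdj (f t) (f (t + 1))) (h₀ : f 0 ∈ C) (hfar : ∀ t, R < t → f t ∉ box R)
    (hesc : Escapes C R (f (R + 1))) : ∃ k : ℕ, f k + f (k + 1) ∈ outerBoundary C R := by
  have hR₀ : 0 ≤ R := by_contra fun h => hfar 0 (by omega) (hR h₀)
  set k := Nat.findGreatest (fun k : ℕ => f k ∈ C) R.toNat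
  have hk : f k ∈ C := Nat.findGreatest_spec (P := fun k : ℕ => f k ∈ C) (Nat.zero_le _) h₀
  have hkR : (k : ℤ) ≤ R := by
    have := Nat.findGreatest_le (P := fun k : ℕ => f k ∈ C) R.toNat
    omega
  have hout : ∀ t, (k : ℤ) < t → f t ∉ C := by
    intro t hkt htC
    by_cases htR : t ≤ R
    · have := Nat.findGreatest_is_greatest (P := fun k : ℕ => f k ∈ C) (n := R.toNat) (k := t.toNat)
        (by omega) (by omega)
      rw [Int.toNat_of_nonneg (by omega)] at this
      exact this htC
    · exact hfar t (by omega) (hR htC)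
  refine ⟨k, f k, f (k + 1), hf k, hk, ?_, rfl⟩
  exact (reflTransGen_of_planeAdj_succ (P := (· ∉ C)) f hf (by omega : (k : ℤ) + 1 ≤ R + 1)
    fun t ht _ => hout t (by omega)).trans hesc

theorem exists_hCode_mem_outerBoundary (h₀ : (0, 0) ∈ C) :
    ∃ k : ℕ, hCode k 0 ∈ outerBoundary C R := by
  have hR₀ : 0 ≤ R := by have := mem_box.1 (hR h₀); omega
  have hesc : Escapes C R (R + 1, 0) :=
    reflTransGen_of_planeAdj_succ (fun t => (R + 1, t)) (fun t => planeAdj_up _ t) (by omega)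
      fun t _ _ => notMem_of_notMem_box hR (by simp only [mem_box]; omega)
  obtain ⟨k, hk⟩ := exists_add_mem_outerBoundary_of_line hR (fun t => (t, 0))
    (fun t => planeAdj_right t 0) h₀ (fun t ht => by simp only [mem_box]; omega) hesc
  exact ⟨k, add_right_eq_hCode (k : ℤ) 0 ▸ hk⟩

theorem exists_vCode_zero_mem_outerBoundary (h₀ : (0, 0) ∈ C) :
    ∃ j : ℕ, vCode 0 j ∈ outerBoundary C R := by
  have hR₀ : 0 ≤ R := by have := mem_box.1 (hR h₀); omega
  have hesc : Escapes C R (0, R + 1) :=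
    reflTransGen_of_planeAdj_succ (fun t => (t, R + 1)) (fun t => planeAdj_right t _) (by omega)
      fun t _ _ => notMem_of_notMem_box hR (by simp only [mem_box]; omega)
  obtain ⟨j, hj⟩ := exists_add_mem_outerBoundary_of_line hR (fun t => (0, t))
    (fun t => planeAdj_up 0 t) h₀ (fun t ht => by simp only [mem_box]; omega) hesc
  exact ⟨j, add_up_eq_vCode 0 (j : ℤ) ▸ hj⟩

variable (hconn : ∀ a ∈ C, ReflTransGen (fun u v => PlaneAdj u v ∧ u ∈ C ∧ v ∈ C) (0, 0) a)
include hconn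

theorem reflTransGen_avoiding_of_crossing {Y : Set (ℤ × ℤ)} (hY : Y ⊆ outerBoundary C R)
    {a b : ℤ × ℤ} (hab : PlaneAdj a b) (ha : a ∈ C) (hb : Escapes C R b) (habY : a + b ∉ Y) :
    ReflTransGen (fun u v => PlaneAdj u v ∧ u + v ∉ Y) (0, 0) (R + 1, R + 1) := by
  have inside := ReflTransGen.mono (p := fun u v => PlaneAdj u v ∧ u + v ∉ Y) (fun u v h =>
    ⟨h.1, fun huv => add_notMem_outerBoundary_of_mem hR h.1 h.2.1 h.2.2 (hY huv)⟩) _ _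
    (hconn a ha)
  have outside := ReflTransGen.mono (p := fun u v => PlaneAdj u v ∧ u + v ∉ Y) (fun u v h =>
    ⟨h.1, fun huv => add_notMem_outerBoundary_of_notMem hR h.1 h.2.1 h.2.2 (hY huv)⟩) _ _ hb
  exact (inside.tail ⟨hab, habY⟩).trans outside

/- If the component `X` of `s` missed `t`, then `X`, like the whole boundary, would have an even
number of edges on each unit square, hence be the cut of a potential; the paths through `s` and
through `t` show that this potential both does and does not separate the origin from the corner. -/
theorem reflTransGen_codeAdj_outerBoundary (hC₀ : (0, 0) ∈ C) {s t : ℤ × ℤ}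
    (hs : s ∈ outerBoundary C R) (ht : t ∈ outerBoundary C R) :
    ReflTransGen (fun u v => CodeAdj u v ∧ u ∈ outerBoundary C R ∧ v ∈ outerBoundary C R) s t := by
  by_contra hst
  set F := outerBoundary C R
  set X : Set (ℤ × ℤ) := {u | u ∈ F ∧ ReflTransGen (fun u v => CodeAdj u v ∧ u ∈ F ∧ v ∈ F) s u}
  have hXF : X ⊆ F := fun u hu => hu.1
  have hFcut := isCut_outerBoundary hR
  have hXcut : IsCut X (potential X) := isCut_potential <|
    hFcut.evenOnSquares.of_subset hXF fun _ _ u hu v hv huX hvF =>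
      ⟨hvF, huX.2.tail ⟨codeAdj_of_mem_squareCodes hu hv, huX.1, hvF⟩⟩
  by_cases hpot : potential X (0, 0) = potential X (R + 1, R + 1)
  · obtain ⟨a, b, hab, ha, hb, rfl⟩ := hs
    have hcut := hXcut.symmDiff hFcut
    rw [symmDiff_of_le hXF] at hcut
    have := hcut.eq_of_reflTransGen <| reflTransGen_avoiding_of_crossing hR hconn
      Set.sdiff_subset hab ha hb fun h => h.2 ⟨h.1, ReflTransGen.refl⟩
    have h₀ : ¬Escapes C R (0, 0) := fun h => h.notMem hR hC₀
    have hcorner : Escapes C R (R + 1, R + 1) := ReflTransGen.refl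
    simp [hpot, h₀, hcorner] at this
  · obtain ⟨a, b, hab, ha, hb, rfl⟩ := ht
    exact hpot <| hXcut.eq_of_reflTransGen <|
      reflTransGen_avoiding_of_crossing hR hconn hXF hab ha hb fun h => hst h.2

end OuterBoundary

section CodeChains

def codeStep (i : Fin 5 × Fin 5) : ℤ × ℤ := ((i.1 : ℤ) - 2, (i.2 : ℤ) - 2)

theorem exists_eq_add_codeStep {s t : ℤ × ℤ} (h : CodeAdj s t) : ∃ i, t = s + codeStep i := by
  simp only [CodeAdj, mem_box, Prod.fst_sub, Prod.snd_sub] at h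
  exact ⟨(⟨(t.1 - s.1 + 2).toNat, by omega⟩, ⟨(t.2 - s.2 + 2).toNat, by omega⟩),
    Prod.ext (by simp [codeStep]; omega) (by simp [codeStep]; omega)⟩

theorem exists_scanl_eq_of_isChain :
    ∀ {s : ℤ × ℤ} {l : List (ℤ × ℤ)}, (s :: l).IsChain CodeAdj →
      ∃ g : List (Fin 5 × Fin 5), List.scanl (fun z i => z + codeStep i) s g = s :: l
  | _, [], _ => ⟨[], rfl⟩
  | s, _ :: _, h => by
    rw [List.isChain_cons_cons] at h
    obtain ⟨i, rfl⟩ := exists_eq_add_codeStep h.1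
    obtain ⟨g, hg⟩ := exists_scanl_eq_of_isChain h.2
    exact ⟨i :: g, by rw [List.scanl_cons, hg]⟩

theorem fst_le_of_isChain :
    ∀ {s : ℤ × ℤ} {l : List (ℤ × ℤ)}, (s :: l).IsChain CodeAdj →
      ∀ t ∈ s :: l, s.1 ≤ t.1 + 2 * l.length
  | _, [], _, t, ht => by simp_all
  | s, u :: l, h, t, ht => by
    rw [List.isChain_cons_cons] at h
    have hsu := h.1
    simp only [CodeAdj, mem_box, Prod.fst_sub] at hsu
    rcases List.mem_cons.1 ht with rfl | ht
    · omega
    · have := fst_le_of_isChain h.2 t ht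
      simp only [List.length_cons]
      omega

end CodeChains

section Contour

theorem exists_subset_box_of_finite {C : Set (ℤ × ℤ)} (hC : C.Finite) : ∃ R, C ⊆ box R := by
  obtain ⟨R, hR⟩ := (hC.image fun a => max |a.1| |a.2|).bddAbove
  refine ⟨R, fun a ha => ?_⟩
  have h := hR (Set.mem_image_of_mem _ ha)
  rw [max_le_iff, abs_le, abs_le] at h
  exact mem_box.2 (by omega)

theorem exists_boundary_chain {C : Set (ℤ × ℤ)} (hC : C.Finite) (h₀ : (0, 0) ∈ C)
    (hconn : ∀ a ∈ C, ReflTransGen (fun u v => PlaneAdj u v ∧ u ∈ C ∧ v ∈ C) (0, 0) a) :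
    ∃ (m k : ℕ) (l : List (ℤ × ℤ)), k < 2 * m + 2 ∧ (hCode k 0 :: l).IsChain CodeAdj ∧
      l.length = 2 * m ∧ (hCode k 0 :: l).toFinset.card = m + 1 ∧
      ∀ s ∈ hCode k 0 :: l, ∃ a b, PlaneAdj a b ∧ a ∈ C ∧ b ∉ C ∧ a + b = s := by
  obtain ⟨R, hR⟩ := exists_subset_box_of_finite hC
  have hF := (finite_box _).subset (outerBoundary_subset_box hR)
  obtain ⟨k, hk⟩ := exists_hCode_mem_outerBoundary hR h₀
  obtain ⟨j, hj⟩ := exists_vCode_zero_mem_outerBoundary hR h₀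
  obtain ⟨l, hl, hto, hlen⟩ := exists_isChain_toFinset_eq (fun _ _ => CodeAdj.symm)
    (hF.mem_toFinset.2 hk) fun a ha =>
      ReflTransGen.mono (fun u v h => ⟨h.1, hF.mem_toFinset.2 h.2.1, hF.mem_toFinset.2 h.2.2⟩)
        _ _ (reflTransGen_codeAdj_outerBoundary hR hconn h₀ hk (hF.mem_toFinset.1 ha))
  have mem : ∀ s, s ∈ hCode k 0 :: l ↔ s ∈ outerBoundary C R := fun s => by
    rw [← List.mem_toFinset, hto, hF.mem_toFinset]
  refine ⟨hF.toFinset.card - 1, k, l, ?_, hl, hlen, ?_, fun s hs => ?_⟩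
  · have := fst_le_of_isChain hl _ ((mem _).2 hj)
    simp only [hCode, vCode] at this
    omega
  · rw [hto]
    have := Finset.card_pos.2 ⟨_, hF.mem_toFinset.2 hk⟩
    omega
  · obtain ⟨a, b, hab, ha, hb, he⟩ := (mem s).1 hs
    exact ⟨a, b, hab, ha, hb.notMem hR, he⟩

end Contour

section Embedding

variable {d : ℕ}

def planeEmb (d : ℕ) (a : ℤ × ℤ) : Fin (d + 2) → ℤ := Fin.cons a.1 (Fin.cons a.2 0)

theorem planeEmb_injective : Function.Injective (planeEmb d) := fun a b h =>
  Prod.ext (by simpa [planeEmb] using congrFun h 0) (by simpa [planeEmb] using congrFun h 1)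

theorem planeEmb_zero : planeEmb d (0, 0) = 0 := by
  ext i
  refine Fin.cases ?_ (fun i => Fin.cases ?_ (fun i => ?_) i) i <;> simp [planeEmb]

theorem PlaneAdj.zdGraph_adj {a b : ℤ × ℤ} (h : PlaneAdj a b) :
    (zdGraph (d + 2)).Adj (planeEmb d a) (planeEmb d b) := by
  change ∑ i, |planeEmb d a i - planeEmb d b i| = 1
  simp only [Fin.sum_univ_succ, planeEmb, Fin.cons_zero, Fin.cons_succ, Pi.zero_apply, sub_self,
    abs_zero, Finset.sum_const_zero, add_zero]
  refine h.induction_on (Q := fun a b => |a.1 - b.1| + |a.2 - b.2| = 1) (fun a b h => ?_)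
    (fun x y => by simp) (fun x y => by simp)
  rwa [abs_sub_comm, abs_sub_comm b.2]

/- A non-code decodes to the junk value `s(0, 0)`. -/
noncomputable def decodeEdge (d : ℕ) (s : ℤ × ℤ) : Sym2 (Fin (d + 2) → ℤ) :=
  if h : IsCode s then s(planeEmb d h.choose, planeEmb d h.choose_spec.choose) else s(0, 0)

theorem decodeEdge_add {a b : ℤ × ℤ} (h : PlaneAdj a b) :
    decodeEdge d (a + b) = s(planeEmb d a, planeEmb d b) := by
  have hs : IsCode (a + b) := ⟨a, b, h, rfl⟩
  obtain ⟨h', he⟩ := hs.choose_spec.choose_spec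
  rw [decodeEdge, dif_pos hs]
  rcases h'.eq_or_eq_of_add_eq h he with ⟨h₁, h₂⟩ | ⟨h₁, h₂⟩
  · rw [h₂, h₁]
  · rw [h₂, h₁, Sym2.eq_swap]

theorem decodeEdge_mem_edgeSet {s : ℤ × ℤ} (hs : IsCode s) :
    decodeEdge d s ∈ (zdGraph (d + 2)).edgeSet := by
  obtain ⟨a, b, h, rfl⟩ := hs
  rw [decodeEdge_add h]
  exact h.zdGraph_adj

theorem injOn_decodeEdge : Set.InjOn (decodeEdge d) {s | IsCode s} := by
  rintro _ ⟨a, b, h, rfl⟩ _ ⟨a', b', h', rfl⟩ he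
  rw [decodeEdge_add h, decodeEdge_add h', Sym2.eq_iff] at he
  rcases he with ⟨h₁, h₂⟩ | ⟨h₁, h₂⟩
  · rw [planeEmb_injective h₁, planeEmb_injective h₂]
  · rw [planeEmb_injective h₁, planeEmb_injective h₂, add_comm]

end Embedding

section PlaneCluster

theorem self_mem_cluster {V : Type} {G : SimpleGraph V} (ω : Config G) (v : V) :
    v ∈ cluster G ω v :=
  ⟨.nil, fun e he => by simp at he⟩

theorem mem_cluster_of_adj {V : Type} {G : SimpleGraph V} {ω : Config G} {v x y : V}
    (hx : x ∈ cluster G ω v) (h : G.Adj x y) (hω : ω ⟨s(x, y), h⟩ = true) :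
    y ∈ cluster G ω v := by
  obtain ⟨w, hw⟩ := hx
  refine ⟨w.concat h, fun e he => ?_⟩
  rw [SimpleGraph.Walk.edges_concat, List.concat_eq_append, List.mem_append,
    List.mem_singleton] at he
  rcases he with he | rfl
  exacts [hw e he, hω]

variable {d : ℕ} (ω : Config (zdGraph (d + 2)))

def OpenPlaneEdge (a b : ℤ × ℤ) : Prop :=
  ∃ h : PlaneAdj a b, ω ⟨s(planeEmb d a, planeEmb d b), h.zdGraph_adj⟩ = true

def planeCluster : Set (ℤ × ℤ) := {u | ReflTransGen (OpenPlaneEdge ω) (0, 0) u}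

theorem planeEmb_mem_cluster {u : ℤ × ℤ} (hu : u ∈ planeCluster ω) :
    planeEmb d u ∈ cluster (zdGraph (d + 2)) ω 0 := by
  induction hu with
  | refl => exact planeEmb_zero (d := d) ▸ self_mem_cluster ω 0
  | tail _ hbc ih =>
    obtain ⟨h, hω⟩ := hbc
    exact mem_cluster_of_adj ih h.zdGraph_adj hω

theorem finite_planeCluster (h : (cluster (zdGraph (d + 2)) ω 0).Finite) :
    (planeCluster ω).Finite :=
  (h.preimage planeEmb_injective.injOn).subset fun _ hu => planeEmb_mem_cluster ω hu

theorem reflTransGen_planeCluster {a : ℤ × ℤ} (ha : a ∈ planeCluster ω) :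
    ReflTransGen (fun u v => PlaneAdj u v ∧ u ∈ planeCluster ω ∧ v ∈ planeCluster ω) (0, 0) a := by
  induction ha with
  | refl => exact .refl
  | tail hab hbc ih => exact ih.tail ⟨hbc.1, hab, hab.tail hbc⟩

theorem closed_of_mem_planeCluster_of_notMem {a b : ℤ × ℤ} (hab : PlaneAdj a b)
    (ha : a ∈ planeCluster ω) (hb : b ∉ planeCluster ω) :
    ω ⟨s(planeEmb d a, planeEmb d b), hab.zdGraph_adj⟩ = false :=
  Bool.eq_false_iff.2 fun h => hb (ha.tail ⟨hab, h⟩)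

end PlaneCluster

section Peierls

variable {d : ℕ} {p : ℝ} {μ : Measure (Config (zdGraph (d + 2)))}

def allClosed (d : ℕ) (F : Finset (ℤ × ℤ)) : Set (Config (zdGraph (d + 2))) :=
  {ω | ∀ e : (zdGraph (d + 2)).edgeSet, (e : Sym2 _) ∈ F.image (decodeEdge d) → ω e = false}

def walkCodes (k : ℕ) (g : List (Fin 5 × Fin 5)) : Finset (ℤ × ℤ) :=
  (List.scanl (fun z i => z + codeStep i) (hCode k 0) g).toFinset

def walkEvent (d m k : ℕ) (g : List.Vector (Fin 5 × Fin 5) (2 * m)) :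
    Set (Config (zdGraph (d + 2))) :=
  {ω | (walkCodes k g.toList).card = m + 1 ∧ (∀ s ∈ walkCodes k g.toList, IsCode s) ∧
    ω ∈ allClosed d (walkCodes k g.toList)}

theorem measure_allClosed_le (hμ : IsBernoulli (zdGraph (d + 2)) p μ) {F : Finset (ℤ × ℤ)}
    (hF : ∀ s ∈ F, IsCode s) : μ (allClosed d F) ≤ ENNReal.ofReal (1 - p) ^ F.card := by
  let E : Finset (zdGraph (d + 2)).edgeSet :=
    (F.image (decodeEdge d)).subtype (· ∈ (zdGraph (d + 2)).edgeSet)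
  have hE : E.card = F.card := by
    rw [Finset.card_subtype, Finset.filter_true_of_mem, Finset.card_image_of_injOn
      (injOn_decodeEdge.mono hF)]
    simp only [Finset.mem_image]
    rintro _ ⟨s, hs, rfl⟩
    exact decodeEdge_mem_edgeSet (hF s hs)
  calc μ (allClosed d F) ≤ μ {ω | ∀ e ∈ E, ω e = (fun _ => false) e} :=
        measure_mono fun ω hω e he => hω e (Finset.mem_subtype.1 he)
    _ = ENNReal.ofReal (1 - p) ^ F.card := by
        rw [hμ.2]
        simp [hE]

theorem measure_walkEvent_le (hμ : IsBernoulli (zdGraph (d + 2)) p μ) (m k : ℕ)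
    (g : List.Vector (Fin 5 × Fin 5) (2 * m)) :
    μ (walkEvent d m k g) ≤ ENNReal.ofReal (1 - p) ^ (m + 1) := by
  by_cases h : (walkCodes k g.toList).card = m + 1 ∧ ∀ s ∈ walkCodes k g.toList, IsCode s
  · calc μ (walkEvent d m k g) ≤ μ (allClosed d (walkCodes k g.toList)) :=
          measure_mono fun ω hω => hω.2.2
      _ ≤ ENNReal.ofReal (1 - p) ^ (m + 1) := h.1 ▸ measure_allClosed_le hμ h.2
  · have hempty : walkEvent d m k g = ∅ :=
      Set.eq_empty_of_forall_notMem fun ω hω => h ⟨hω.1, hω.2.1⟩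
    rw [hempty, measure_empty]
    exact zero_le

theorem setOf_finite_cluster_subset :
    {ω : Config (zdGraph (d + 2)) | (cluster (zdGraph (d + 2)) ω 0).Finite} ⊆
      ⋃ i : Σ m : ℕ, Fin (2 * m + 2) × List.Vector (Fin 5 × Fin 5) (2 * m),
        walkEvent d i.1 i.2.1 i.2.2 := by
  intro ω hω
  obtain ⟨m, k, l, hk, hl, hlen, hcard, hbd⟩ := exists_boundary_chain (finite_planeCluster ω hω)
    ReflTransGen.refl fun a ha => reflTransGen_planeCluster ω ha
  obtain ⟨g, hg⟩ := exists_scanl_eq_of_isChain hl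
  have hglen : g.length = 2 * m := by simpa [hlen] using congrArg List.length hg
  have hcodes : walkCodes k g = (hCode k 0 :: l).toFinset := by rw [walkCodes, hg]
  refine Set.mem_iUnion.2 ⟨⟨m, ⟨k, hk⟩, ⟨g, hglen⟩⟩, ?_⟩
  simp only [walkEvent, List.Vector.toList_mk, hcodes, List.mem_toFinset]
  refine ⟨hcard, fun s hs => ?_, fun e he => ?_⟩
  · obtain ⟨a, b, hab, -, -, he⟩ := hbd s hs
    exact ⟨a, b, hab, he⟩
  · obtain ⟨s, hs, hse⟩ := Finset.mem_image.1 he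
    obtain ⟨a, b, hab, ha, hb, rfl⟩ := hbd s (List.mem_toFinset.1 hs)
    rw [decodeEdge_add hab] at hse
    obtain rfl : e = ⟨_, hab.zdGraph_adj⟩ := Subtype.ext hse.symm
    exact closed_of_mem_planeCluster_of_notMem ω hab ha hb

theorem card_walkIndex_le (m : ℕ) : (2 * m + 2) * 25 ^ (2 * m) ≤ 1250 ^ (m + 1) := by
  have := Nat.lt_two_pow_self (n := m)
  calc (2 * m + 2) * 25 ^ (2 * m) = 2 * (m + 1) * 625 ^ m := by rw [pow_mul]; ring
    _ ≤ 2 * 2 ^ m * (625 ^ m * 625) := by gcongr <;> omega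
    _ = 1250 ^ (m + 1) := by rw [show 1250 = 2 * 625 from rfl, mul_pow]; ring

theorem measure_finite_cluster_le (hμ : IsBernoulli (zdGraph (d + 2)) p μ) :
    μ {ω | (cluster (zdGraph (d + 2)) ω 0).Finite} ≤
      ∑' m : ℕ, (1250 * ENNReal.ofReal (1 - p)) ^ (m + 1) := by
  calc μ {ω | (cluster (zdGraph (d + 2)) ω 0).Finite}
      ≤ ∑' i : Σ m : ℕ, Fin (2 * m + 2) × List.Vector (Fin 5 × Fin 5) (2 * m),
          μ (walkEvent d i.1 i.2.1 i.2.2) :=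
        (measure_mono setOf_finite_cluster_subset).trans (measure_iUnion_le _)
    _ ≤ ∑' m : ℕ, ∑' _ : Fin (2 * m + 2) × List.Vector (Fin 5 × Fin 5) (2 * m),
          ENNReal.ofReal (1 - p) ^ (m + 1) := by
        rw [ENNReal.tsum_sigma']
        exact ENNReal.tsum_le_tsum fun m => ENNReal.tsum_le_tsum fun i =>
          measure_walkEvent_le hμ m i.1 i.2
    _ ≤ ∑' m : ℕ, (1250 * ENNReal.ofReal (1 - p)) ^ (m + 1) := by
        refine ENNReal.tsum_le_tsum fun m => ?_
        rw [tsum_fintype, Finset.sum_const, Finset.card_univ, nsmul_eq_mul, mul_pow]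
        gcongr
        simp only [Fintype.card_prod, Fintype.card_fin, card_vector]
        exact_mod_cast card_walkIndex_le m

theorem tsum_pow_succ_lt_one {x : ℝ≥0∞} (hx : x < 2⁻¹) : ∑' n : ℕ, x ^ (n + 1) < 1 := by
  have hx₁ : x < 1 := hx.trans ENNReal.one_half_lt_one
  rw [ENNReal.tsum_geometric_add_one, ← div_eq_mul_inv, ENNReal.div_lt_iff
    (Or.inl (tsub_pos_of_lt hx₁).ne') (Or.inl (ENNReal.sub_ne_top ENNReal.one_ne_top)),
    one_mul, lt_tsub_iff_right]
  calc x + x < 2⁻¹ + 2⁻¹ := ENNReal.add_lt_add hx hx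
    _ = 1 := ENNReal.inv_two_add_inv_two

theorem measure_finite_cluster_lt_one (hμ : IsBernoulli (zdGraph (d + 2)) p μ)
    (hp : 1 - 1 / 5000 ≤ p) : μ {ω | (cluster (zdGraph (d + 2)) ω 0).Finite} < 1 := by
  refine (measure_finite_cluster_le hμ).trans_lt (tsum_pow_succ_lt_one ?_)
  calc 1250 * ENNReal.ofReal (1 - p) = ENNReal.ofReal (1250 * (1 - p)) := by
        rw [ENNReal.ofReal_mul (by norm_num), ENNReal.ofReal_ofNat]
    _ ≤ ENNReal.ofReal 4⁻¹ := ENNReal.ofReal_le_ofReal (by linarith)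
    _ < 2⁻¹ := by
        rw [ENNReal.ofReal_inv_of_pos (by norm_num), ENNReal.ofReal_ofNat]
        exact ENNReal.inv_lt_inv.2 (by norm_num)

end Peierls

section CriticalProbability

variable {V : Type} {G : SimpleGraph V} {P : ℝ → Measure (Config G)} {v : V}

theorem theta_pos_of_measure_finite_lt_one {p : ℝ} [IsProbabilityMeasure (P p)]
    (h : P p {ω | (cluster G ω v).Finite} < 1) : 0 < theta G P v p := by
  refine pos_iff_ne_zero.2 fun h₀ => h.not_ge ?_
  have hunion : {ω | (cluster G ω v).Infinite} ∪ {ω | (cluster G ω v).Finite} = Set.univ :=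
    Set.eq_univ_of_forall fun ω => (em _).symm
  calc (1 : ℝ≥0∞) = P p ({ω | (cluster G ω v).Infinite} ∪ {ω | (cluster G ω v).Finite}) := by
        rw [hunion, measure_univ]
    _ ≤ P p {ω | (cluster G ω v).Infinite} + P p {ω | (cluster G ω v).Finite} :=
        measure_union_le _ _
    _ = P p {ω | (cluster G ω v).Finite} := by rw [← theta, h₀, zero_add]

theorem pc_le_of_theta_pos {p₀ : ℝ} (hp₀ : 0 ≤ p₀)
    (h : ∀ p, p₀ ≤ p → p ≤ 1 → 0 < theta G P v p) : pc G P v ≤ p₀ :=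
  Real.sSup_le (fun p ⟨⟨_, hp₁⟩, hθ⟩ => not_lt.1 fun hlt => (h p hlt.le hp₁).ne' hθ) hp₀

end CriticalProbability

end Percolation

/-- For bond percolation on `ℤ^d` with `d ≥ 2`, `p_c(ℤ^d) < 1`: there exists
`p < 1` with `θ(p) > 0`. -/
theorem pc_lt_one (d : ℕ) (hd : 2 ≤ d)
    (P : ℝ → Measure (Config (zdGraph d)))
    (hP : ∀ p ∈ Set.Icc (0:ℝ) 1, IsBernoulli (zdGraph d) p (P p)) :
    pc (zdGraph d) P 0 < 1 ∧ ∃ p : ℝ, 0 ≤ p ∧ p < 1 ∧ 0 < theta (zdGraph d) P 0 p := by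
  obtain ⟨d, rfl⟩ := Nat.exists_eq_add_of_le' hd
  have hθ : ∀ p, 1 - 1 / 5000 ≤ p → p ≤ 1 → 0 < theta (zdGraph (d + 2)) P 0 p := by
    intro p hp hp₁
    have hB := hP p ⟨by linarith, hp₁⟩
    have := hB.1
    exact theta_pos_of_measure_finite_lt_one (measure_finite_cluster_lt_one hB hp)
  exact ⟨(pc_le_of_theta_pos (by norm_num) hθ).trans_lt (by norm_num),
    1 - 1 / 5000, by norm_num, by norm_num, hθ _ le_rfl (by norm_num)⟩
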